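/- Let a^E be a symmetric positive semidefinite bilinear form and S^E a symmetric bilinear form satisfying α_* a^E(v,v) ≤ S^E(v,v) ≤ α^* a^E(v,v) for all v in the kernel complement {v : Πv = 0}, with 0 < α_* ≤ α^*. Then the discrete form a_h(u,v) = a^E(Πu, Πv) + S^E((I−Π)u, (I−Π)v) satisfies min(1, α_*)·a^E(v,v) ≤ a_h(v,v) ≤ max(1, α^*)·a^E(v,v) for all v, where Π is the a^E-orthogonal projection onto a subspace. -/

import Mathlib

/-- Two-sided stability bound for the stabilized VEM discrete bilinear form. -/
theorem vem_discrete_form_stability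
    {V : Type*} [AddCommGroup V] [Module ℝ V]
    (aE SE : V →ₗ[ℝ] V →ₗ[ℝ] ℝ)
    (haSymm : ∀ u v : V, aE u v = aE v u)
    (haPsd : ∀ v : V, 0 ≤ aE v v)
    (hSSymm : ∀ u v : V, SE u v = SE v u)
    (hSPsd : ∀ v : V, 0 ≤ SE v v)
    (W : Submodule ℝ V) (Pr : V →ₗ[ℝ] V)
    (hrange : ∀ v : V, Pr v ∈ W)
    (hproj : ∀ q ∈ W, Pr q = q)
    (horth : ∀ v : V, ∀ q ∈ W, aE (Pr v) q = aE v q)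
    (αs αt : ℝ) (hα0 : 0 < αs) (hαle : αs ≤ αt)
    (hbound : ∀ v : V, Pr v = 0 →
      αs * aE v v ≤ SE v v ∧ SE v v ≤ αt * aE v v)
    (ah : V → V → ℝ)
    (hah : ∀ u v : V, ah u v = aE (Pr u) (Pr v) + SE (u - Pr u) (v - Pr v)) :
    ∀ v : V, min 1 αs * aE v v ≤ ah v v ∧ ah v v ≤ max 1 αt * aE v v := by
  intro v
  set w := Pr v with hw
  have hz0 : Pr (v - w) = 0 := by
    have : Pr w = w := hproj w (hrange v)
    rw [map_sub, this, ← hw, sub_self]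
  have hb := hbound (v - w) hz0
  -- Pythagorean identity: aE v v = aE w w + aE (v-w) (v-w)
  have hww : aE w w = aE v w := horth v w (hrange v)
  have hpyth : aE (v - w) (v - w) = aE v v - aE w w := by
    have h1 : aE (v - w) (v - w) = aE v v - aE v w - (aE w v - aE w w) := by
      simp only [map_sub, LinearMap.sub_apply]
      linarith [haSymm w v]
    rw [h1, haSymm w v, hww]; ring
  have hah' : ah v v = aE w w + SE (v - w) (v - w) := by
    rw [hah v v]
  have hwpos : 0 ≤ aE w w := haPsd w
  have hzpos : 0 ≤ aE (v - w) (v - w) := haPsd (v - w)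
  have hmin1 : min 1 αs ≤ 1 := min_le_left _ _
  have hmin2 : min 1 αs ≤ αs := min_le_right _ _
  have hmax1 : (1:ℝ) ≤ max 1 αt := le_max_left _ _
  have hmax2 : αt ≤ max 1 αt := le_max_right _ _
  constructor
  · have : min 1 αs * aE v v = min 1 αs * aE w w + min 1 αs * aE (v - w) (v - w) := by
      rw [hpyth]; ring
    rw [this, hah']
    have h1 : min 1 αs * aE w w ≤ aE w w := by nlinarith
    have h2 : min 1 αs * aE (v - w) (v - w) ≤ SE (v - w) (v - w) := by nlinarith [hb.1]
    linarith
  · have : max 1 αt * aE v v = max 1 αt * aE w w + max 1 αt * aE (v - w) (v - w) := by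
      rw [hpyth]; ring
    rw [this, hah']
    have h1 : aE w w ≤ max 1 αt * aE w w := by nlinarith
    have h2 : SE (v - w) (v - w) ≤ max 1 αt * aE (v - w) (v - w) := by nlinarith [hb.2]
    linarith
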